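/- If G is a graph with a bramble of order at least h, where h ≥ 3, then G contains a cycle of length at least h, and in particular G contains the cycle C_h on h vertices as a minor. -/

import Mathlib

open SimpleGraph

variable {V : Type*}

/-- A bramble: a family of vertex sets, each inducing a connected subgraph,
pairwise intersecting or joined by an edge. -/
def IsBramble (G : SimpleGraph V) (B : Set (Set V)) : Prop :=
  (∀ S ∈ B, S.Nonempty ∧ (G.induce S).Connected) ∧
  (∀ S ∈ B, ∀ T ∈ B, (S ∩ T).Nonempty ∨ ∃ u ∈ S, ∃ v ∈ T, G.Adj u v)

/-- `X` hits every element of the family `B`. -/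
def HitsAll (B : Set (Set V)) (X : Set V) : Prop := ∀ S ∈ B, (S ∩ X).Nonempty

/-- The order of a bramble: minimum size of a hitting set. -/
noncomputable def brambleOrder (B : Set (Set V)) : ℕ :=
  sInf {n | ∃ X : Set V, X.Finite ∧ X.ncard = n ∧ HitsAll B X}

/-- The subfamily of elements of `B` meeting `X`. -/
def sub (B : Set (Set V)) (X : Set V) : Set (Set V) := {S ∈ B | (S ∩ X).Nonempty}

/-- `H` is a minor of `G`, via branch sets. -/
def IsMinor {W : Type*} (H : SimpleGraph W) (G : SimpleGraph V) : Prop :=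
  ∃ φ : W → Set V, (∀ w, (φ w).Nonempty ∧ (G.induce (φ w)).Connected) ∧
    (∀ w w', w ≠ w' → Disjoint (φ w) (φ w')) ∧
    (∀ w w', H.Adj w w' → ∃ u ∈ φ w, ∃ v ∈ φ w', G.Adj u v)

/-!
Take a path `P` that meets an inclusion-maximal subfamily of the bramble and is shortest among
the paths meeting that subfamily. By minimality of length, each end `u` of `P` lies in an element
`T_u` of the bramble meeting `P` only in `u`. By maximality, `P` meets every element: a missed
element touches `T_v`, so a path through `T_v` to it would extend `P`. Joining the ends through
`T_u ∪ T_v` closes `P` into a cycle whose vertex set hits the bramble, so the cycle has at least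
`h` vertices, and cutting it into `h` arcs gives the branch sets of a `C_h` minor.
-/

lemma List.ncard_setOf_mem_le_length (l : List V) : {x | x ∈ l}.ncard ≤ l.length := by
  classical
  rw [← List.coe_toFinset, Set.ncard_coe_finset]
  exact l.toFinset_card_le

lemma HitsAll.mono {B : Set (Set V)} {X Y : Set V} (hX : HitsAll B X) (hXY : X ⊆ Y) :
    HitsAll B Y :=
  fun S hS => (hX S hS).mono (Set.inter_subset_inter_right S hXY)

lemma brambleOrder_le_ncard {B : Set (Set V)} {X : Set V} (hX : X.Finite) (hB : HitsAll B X) :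
    brambleOrder B ≤ X.ncard :=
  Nat.sInf_le ⟨X, hX, rfl, hB⟩

lemma sub_mono {B : Set (Set V)} {X Y : Set V} (hXY : X ⊆ Y) : sub B X ⊆ sub B Y :=
  fun S ⟨hS, hSX⟩ => ⟨hS, hSX.mono (Set.inter_subset_inter_right S hXY)⟩

lemma ncard_diff_sub_lt_of_ssubset [Finite V] {B : Set (Set V)} {X Y : Set V}
    (h : sub B X ⊂ sub B Y) : (B \ sub B Y).ncard < (B \ sub B X).ncard := by
  obtain ⟨S, hSY, hSX⟩ := Set.exists_of_ssubset h
  refine Set.ncard_lt_ncard ((Set.ssubset_iff_of_subset (Set.sdiff_subset_sdiff_right h.subset)).2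
    ⟨S, ⟨hSY.1, hSX⟩, fun hS => hS.2 hSY⟩) (Set.toFinite _)

namespace SimpleGraph

variable {G : SimpleGraph V} {B : Set (Set V)} {S T : Set V} {u v w : V}

lemma exists_walk_support_subset_of_connected_induce {s : Set V} (hs : (G.induce s).Connected)
    (hu : u ∈ s) (hv : v ∈ s) : ∃ p : G.Walk u v, ∀ x ∈ p.support, x ∈ s := by
  obtain ⟨p⟩ := hs.preconnected ⟨u, hu⟩ ⟨v, hv⟩
  refine ⟨p.map (Embedding.induce s).toHom, fun x hx => ?_⟩
  erw [Walk.support_map, List.mem_map] at hx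
  obtain ⟨y, -, rfl⟩ := hx
  exact y.2

namespace Walk

lemma IsPath.append {p : G.Walk u v} {q : G.Walk v w} (hp : p.IsPath) (hq : q.IsPath)
    (hpq : ∀ x ∈ p.support, x ∈ q.support → x = v) : (p.append q).IsPath := by
  rw [isPath_def, support_append]
  refine hp.support_nodup.append hq.support_nodup.tail fun x hxp hxq => ?_
  obtain rfl := hpq x hxp (List.mem_of_mem_tail hxq)
  have hnodup := hq.support_nodup
  rw [← cons_tail_support] at hnodup
  exact (List.nodup_cons.mp hnodup).1 hxq

lemma isCycle_cons_of_isPath (h : G.Adj u v) {p : G.Walk v u} (hp : p.IsPath)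
    (hl : 2 ≤ p.length) : (cons h p).IsCycle := by
  rw [isCycle_iff_isPath_tail_and_le_length]
  simpa [hp] using hl

lemma exists_isCycle_support_superset {p q : G.Walk u v} (hp : p.IsPath) (hq : q.IsPath)
    (hpq : ∀ x ∈ p.support, x ∈ q.support → x = u ∨ x = v) (hl : 2 ≤ p.length) :
    ∃ C : G.Walk u u, C.IsCycle ∧ ∀ x ∈ p.support, x ∈ C.support := by
  cases q with
  | nil => simp [(isPath_iff_nil.mp hp).length_eq_zero] at hl
  | cons h q =>
    obtain ⟨hq, hu⟩ := (cons_isPath_iff h q).mp hq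
    refine ⟨cons h (q.append p.reverse),
      isCycle_cons_of_isPath h (hq.append hp.reverse fun x hxq hxp => ?_) ?_, ?_⟩
    · rw [support_reverse, List.mem_reverse] at hxp
      rcases hpq x hxp (List.mem_cons_of_mem _ hxq) with rfl | rfl
      · exact absurd hxq hu
      · rfl
    · simp only [length_append, length_reverse]
      omega
    · intro x hx
      simp [hx]

lemma ncard_support_le_length {p : G.Walk u u} (hp : ¬p.Nil) :
    {x | x ∈ p.support}.ncard ≤ p.length := by
  have : {x | x ∈ p.support} = {x | x ∈ p.support.tail} := by
    ext x
    simp only [Set.mem_ofPred_eq, mem_support_iff]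
    exact or_iff_right_of_imp fun hx => hx ▸ end_mem_tail_support hp
  simpa [this] using p.support.tail.ncard_setOf_mem_le_length

lemma getVert_image_Icc_eq (p : G.Walk u v) {a b : ℕ} (hab : a ≤ b) (hb : b ≤ p.length) :
    p.getVert '' Set.Icc a b = {x | x ∈ ((p.drop a).take (b - a)).support} := by
  ext x
  simp only [Set.mem_image, Set.mem_Icc, Set.mem_ofPred_eq, mem_support_iff_exists_getVert,
    take_getVert, drop_getVert, take_length, drop_length]
  constructor
  · rintro ⟨j, ⟨haj, hjb⟩, rfl⟩
    exact ⟨j - a, by congr 1; omega, by omega⟩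
  · rintro ⟨n, rfl, hn⟩
    exact ⟨a + min (b - a) n, ⟨by omega, by omega⟩, rfl⟩

lemma connected_induce_getVert_image_Icc (p : G.Walk u v) {a b : ℕ} (hab : a ≤ b)
    (hb : b ≤ p.length) : (G.induce (p.getVert '' Set.Icc a b)).Connected := by
  rw [p.getVert_image_Icc_eq hab hb]
  exact connected_induce_support _

end Walk

lemma isMinor_cycleGraph_of_isCycle {n : ℕ} (hn : 3 ≤ n) {C : G.Walk u u} (hC : C.IsCycle)
    (hlen : n ≤ C.length) : IsMinor (cycleGraph n) G := by
  obtain ⟨m, rfl⟩ : ∃ m, n = m + 2 := ⟨n - 2, by omega⟩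
  -- The last arc absorbs the `C.length - n` surplus vertices of `C`.
  let last : Fin (m + 2) → ℕ := fun i => if i = Fin.last (m + 1) then C.length - 1 else i
  have hle (i : Fin (m + 2)) : (i : ℕ) ≤ last i := by
    simp only [last]; split_ifs <;> omega
  have hlast (i : Fin (m + 2)) : last i < C.length := by
    simp only [last]; split_ifs <;> omega
  let φ : Fin (m + 2) → Set V := fun i => C.getVert '' Set.Icc i (last i)
  have hsucc (i : Fin (m + 2)) : ∃ a ∈ φ i, ∃ b ∈ φ (i + 1), G.Adj a b := by
    refine ⟨C.getVert (last i), ⟨_, ⟨hle i, le_rfl⟩, rfl⟩, C.getVert (last i + 1), ?_,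
      C.adj_getVert_succ (hlast i)⟩
    by_cases hi : i = Fin.last (m + 1)
    · refine ⟨0, ?_, ?_⟩
      · simp [hi, Fin.last_add_one]
      · simp only [last, if_pos hi]
        rw [Nat.sub_add_cancel (by omega), Walk.getVert_length, Walk.getVert_zero]
    · have hval : ((i + 1 : Fin (m + 2)) : ℕ) = i + 1 := by rw [Fin.val_add_one, if_neg hi]
      exact ⟨i + 1, ⟨hval.le, hval ▸ hle (i + 1)⟩, by simp only [last, if_neg hi]⟩
  refine ⟨φ, fun i => ⟨⟨_, i, ⟨le_rfl, hle i⟩, rfl⟩,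
    C.connected_induce_getVert_image_Icc (hle i) (hlast i).le⟩, fun i j hij => ?_,
    fun i j hij => ?_⟩
  · rw [Set.disjoint_left]
    rintro _ ⟨k, hk, rfl⟩ ⟨l, hl, hlk⟩
    have hk' := hlast i
    have hl' := hlast j
    obtain rfl := hC.getVert_injOn' (show l ≤ C.length - 1 by grind)
      (show k ≤ C.length - 1 by grind) hlk
    apply hij
    ext
    simp only [last] at hk hl
    split_ifs at hk hl <;> grind
  · rcases cycleGraph_adj.mp hij with h | h
    · obtain rfl : i = j + 1 := (sub_eq_iff_eq_add.mp h).trans (add_comm 1 j)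
      obtain ⟨a, ha, b, hb, hab⟩ := hsucc j
      exact ⟨b, hb, a, ha, hab.symm⟩
    · obtain rfl : j = i + 1 := (sub_eq_iff_eq_add.mp h).trans (add_comm 1 i)
      exact hsucc i
namespace IsBramble

lemma exists_walk_to (hB : IsBramble G B) (hT : T ∈ B) (hv : v ∈ T) (hS : S ∈ B) :
    ∃ w ∈ S, ∃ q : G.Walk v w, ∀ x ∈ q.support, x ∈ T ∨ x = w := by
  rcases hB.2 S hS T hT with ⟨w, hwS, hwT⟩ | ⟨s, hs, t, ht, hst⟩
  · obtain ⟨q, hq⟩ := exists_walk_support_subset_of_connected_induce (hB.1 T hT).2 hv hwT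
    exact ⟨w, hwS, q, fun x hx => Or.inl (hq x hx)⟩
  · obtain ⟨q, hq⟩ := exists_walk_support_subset_of_connected_induce (hB.1 T hT).2 hv ht
    refine ⟨s, hs, q.concat hst.symm, fun x hx => ?_⟩
    rw [Walk.support_concat, List.mem_append, List.mem_singleton] at hx
    exact hx.imp (hq x) id

lemma exists_walk_support_subset_union (hB : IsBramble G B) (hT : T ∈ B) (hS : S ∈ B)
    (hu : u ∈ T) (hv : v ∈ S) : ∃ q : G.Walk u v, ∀ x ∈ q.support, x ∈ T ∪ S := by
  obtain ⟨w, hw, q, hq⟩ := hB.exists_walk_to hT hu hS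
  obtain ⟨r, hr⟩ := exists_walk_support_subset_of_connected_induce (hB.1 S hS).2 hw hv
  refine ⟨q.append r, fun x hx => ?_⟩
  rcases (Walk.mem_support_append_iff q r).mp hx with hx | hx
  · rcases hq x hx with hxT | rfl
    exacts [Or.inl hxT, Or.inr hw]
  · exact Or.inr (hr x hx)

end IsBramble

namespace Walk

structure IsExtremalPath (B : Set (Set V)) (p : G.Walk u v) : Prop where
  isPath : p.IsPath
  not_ssubset : ∀ {w w' : V} (q : G.Walk w w'), q.IsPath →
    ¬sub B {x | x ∈ p.support} ⊂ sub B {x | x ∈ q.support}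
  length_le : ∀ {w w' : V} (q : G.Walk w w'), q.IsPath →
    sub B {x | x ∈ q.support} = sub B {x | x ∈ p.support} → p.length ≤ q.length

lemma exists_isExtremalPath [Finite V] [Nonempty V] (G : SimpleGraph V) (B : Set (Set V)) :
    ∃ (u v : V) (p : G.Walk u v), p.IsExtremalPath B := by
  let key : (Σ u v : V, G.Walk u v) → ℕ ×ₗ ℕ := fun q =>
    toLex ((B \ sub B {x | x ∈ q.2.2.support}).ncard, q.2.2.length)
  obtain ⟨⟨u, v, p⟩, hp, hmin⟩ := (InvImage.wf key wellFounded_lt).has_min {q | q.2.2.IsPath}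
    ⟨⟨_, _, nil (u := Classical.arbitrary V)⟩, IsPath.nil⟩
  refine ⟨u, v, p, hp, fun {w w'} q hq hpq => hmin ⟨w, w', q⟩ hq ?_, fun {w w'} q hq hpq => ?_⟩
  · exact Prod.Lex.toLex_lt_toLex.2 (Or.inl (ncard_diff_sub_lt_of_ssubset hpq))
  · by_contra! hlt
    exact hmin ⟨w, w', q⟩ hq (Prod.Lex.toLex_lt_toLex.2 (Or.inr ⟨by simp only [hpq], hlt⟩))

variable {p : G.Walk u v}

lemma setOf_mem_support_reverse (p : G.Walk u v) :
    {x | x ∈ p.reverse.support} = {x | x ∈ p.support} := by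
  simp only [support_reverse, List.mem_reverse]

lemma IsExtremalPath.reverse (hp : p.IsExtremalPath B) : p.reverse.IsExtremalPath B where
  isPath := hp.isPath.reverse
  not_ssubset q hq := by rw [setOf_mem_support_reverse]; exact hp.not_ssubset q hq
  length_le q hq hqp := by
    rw [setOf_mem_support_reverse] at hqp
    rw [length_reverse]
    exact hp.length_le q hq hqp

lemma IsExtremalPath.sub_nonempty (hp : p.IsExtremalPath B) (hS : S ∈ B) (hSne : S.Nonempty) :
    (sub B {x | x ∈ p.support}).Nonempty := by
  obtain ⟨x, hx⟩ := hSne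
  by_contra! hempty
  refine hp.not_ssubset (nil : G.Walk x x) IsPath.nil ?_
  rw [hempty, Set.empty_ssubset]
  exact ⟨S, hS, x, hx, by simp⟩

lemma IsExtremalPath.exists_inter_eq_singleton (hp : p.IsExtremalPath B)
    (hne : (sub B {x | x ∈ p.support}).Nonempty) :
    ∃ T ∈ B, T ∩ {x | x ∈ p.support} = {u} := by
  cases p with
  | nil =>
    obtain ⟨T, hT, hTu⟩ := hne
    exact ⟨T, hT, hTu.subset_singleton_iff.mp fun x hx => by simpa using hx.2⟩
  | cons h q =>
    by_contra! hpriv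
    have hsub : sub B {x | x ∈ q.support} = sub B {x | x ∈ (cons h q).support} := by
      refine (sub_mono fun x hx => List.mem_cons_of_mem u hx).antisymm fun T ⟨hT, hTp⟩ => ⟨hT, ?_⟩
      obtain ⟨x, ⟨hxT, hxp⟩, hxu⟩ :=
        Set.not_subset.mp fun hsub => hpriv T hT (hTp.subset_singleton_iff.mp hsub)
      exact ⟨x, hxT, (List.mem_cons.mp hxp).resolve_left hxu⟩
    have := hp.length_le q hp.isPath.of_cons hsub
    simp at this

lemma IsExtremalPath.hitsAll (hp : p.IsExtremalPath B) (hB : IsBramble G B) (hT : T ∈ B)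
    (hTv : T ∩ {x | x ∈ p.support} = {v}) : HitsAll B {x | x ∈ p.support} := by
  classical
  intro S hS
  by_contra hSp
  have hvT : v ∈ T := (hTv.ge rfl).1
  obtain ⟨w, hw, q, hq⟩ := hB.exists_walk_to hT hvT hS
  have hpath : (p.append q.bypass).IsPath := by
    refine hp.isPath.append q.bypass_isPath fun x hxp hxq => ?_
    rcases hq x (q.support_bypass_subset_support hxq) with hxT | rfl
    · exact hTv.le ⟨hxT, hxp⟩
    · exact absurd ⟨x, hw, hxp⟩ hSp
  refine hp.not_ssubset _ hpath ((Set.ssubset_iff_of_subset ?_).2 ⟨S, ⟨hS, ?_⟩, fun h => hSp h.2⟩)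
  · exact sub_mono fun x hx => (mem_support_append_iff _ _).2 (Or.inl hx)
  · exact ⟨w, hw, (mem_support_append_iff _ _).2 (Or.inr (end_mem_support _))⟩

end Walk

theorem IsBramble.exists_isCycle_hitsAll [Finite V] (hB : IsBramble G B)
    (hord : 3 ≤ brambleOrder B) :
    ∃ (x : V) (C : G.Walk x x), C.IsCycle ∧ HitsAll B {y | y ∈ C.support} := by
  classical
  obtain ⟨S, hS, x, hx⟩ : ∃ S ∈ B, S.Nonempty := by
    by_contra! hB0
    have := brambleOrder_le_ncard Set.finite_empty fun S hS =>
      absurd (hB0 S hS) (hB.1 S hS).1.ne_empty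
    rw [Set.ncard_empty] at this
    omega
  have : Nonempty V := ⟨x⟩
  obtain ⟨u, v, p, hp⟩ := Walk.exists_isExtremalPath G B
  have hne := hp.sub_nonempty hS ⟨x, hx⟩
  obtain ⟨Tu, hTu, hTu'⟩ := hp.exists_inter_eq_singleton hne
  obtain ⟨Tv, hTv, hTv'⟩ := hp.reverse.exists_inter_eq_singleton
    (by rwa [Walk.setOf_mem_support_reverse])
  rw [Walk.setOf_mem_support_reverse] at hTv'
  have hhit := hp.hitsAll hB hTv hTv'
  have hlen : 2 ≤ p.length := by
    have := (brambleOrder_le_ncard (Set.toFinite _) hhit).trans p.support.ncard_setOf_mem_le_length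
    rw [Walk.length_support] at this
    omega
  obtain ⟨R, hR⟩ := hB.exists_walk_support_subset_union hTu hTv
    (hTu'.ge rfl).1 (hTv'.ge rfl).1
  obtain ⟨C, hC, hpC⟩ := Walk.exists_isCycle_support_superset hp.isPath R.bypass_isPath
    (fun y hyp hyR => (hR y (R.support_bypass_subset_support hyR)).imp
      (fun hyT => hTu'.le ⟨hyT, hyp⟩) fun hyT => hTv'.le ⟨hyT, hyp⟩) hlen
  exact ⟨u, C, hC, hhit.mono hpC⟩

end SimpleGraph

/-- A bramble of order at least `h ≥ 3` yields a cycle of length at least `h`,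
and in particular a `C_h` minor. -/
theorem stmt_10 [Fintype V] (G : SimpleGraph V) (B : Set (Set V)) (h : ℕ) (hh : 3 ≤ h)
    (hB : IsBramble G B) (hord : h ≤ brambleOrder B) :
    (∃ (v : V) (w : G.Walk v v), w.IsCycle ∧ h ≤ w.length) ∧
    IsMinor (SimpleGraph.cycleGraph h) G := by
  obtain ⟨x, C, hC, hhit⟩ := hB.exists_isCycle_hitsAll (hh.trans hord)
  have hlen : h ≤ C.length := hord.trans ((brambleOrder_le_ncard (Set.toFinite _) hhit).trans
    (C.ncard_support_le_length hC.not_nil))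
  exact ⟨⟨x, C, hC, hlen⟩, SimpleGraph.isMinor_cycleGraph_of_isCycle hh hC hlen⟩
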